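/- arXiv:2308.16359 — 2 statements merged into one kernel-verified Lean document; each statement's English description precedes it below -/
import Mathlib

section
/- If a finite set X ⊆ Aut(T) is N-reduced, then the subgroup G = ⟨X⟩ is purely hyperbolic and X is a free basis of G. -/
noncomputable section

open Pointwise

namespace TreePaper

variable {V : Type*}

section Defs

variable (T : SimpleGraph V) (v0 : V)

/-- The vertex set of the geodesic segment `[u, w]` in the tree `T`. -/
def seg (u w : V) : Set V := {x | T.dist u x + T.dist x w = T.dist u w}

/-- `|g| = d(v0, g·v0)`. -/
def nrm (g : T ≃g T) : ℕ := T.dist v0 (g v0)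

/-- `δ(g, h) = (|g| + |h| - |g⁻¹h|)/2`, as a rational number. -/
noncomputable def dlt (g h : T ≃g T) : ℚ :=
  ((nrm T v0 g : ℚ) + (nrm T v0 h : ℚ) - (nrm T v0 (g⁻¹ * h) : ℚ)) / 2

/-- An automorphism is elliptic if it fixes a vertex or inverts an edge. -/
def IsElliptic (g : T ≃g T) : Prop :=
  (∃ v : V, g v = v) ∨ (∃ u w : V, T.Adj u w ∧ g u = w ∧ g w = u)

/-- Hyperbolic = not elliptic. -/
def IsHyperbolic (g : T ≃g T) : Prop := ¬ IsElliptic T g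

/-- Translation length: the minimum of `d(v, g·v)` over all vertices `v`. -/
noncomputable def tl (g : T ≃g T) : ℕ := sInf (Set.range fun v : V => T.dist v (g v))

/-- The (vertex set of the) axis of `g`: vertices moved exactly the translation length. -/
def axisSet (g : T ≃g T) : Set V := {v : V | T.dist v (g v) = tl T g}

/-- A subgroup is purely hyperbolic if every nontrivial element is hyperbolic. -/
def PurelyHyperbolic (G : Subgroup (T ≃g T)) : Prop :=
  ∀ g ∈ G, g ≠ 1 → IsHyperbolic T g

/-- `X^± = X ∪ X⁻¹`. -/
def Xpm (X : Set (T ≃g T)) : Set (T ≃g T) := X ∪ X⁻¹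

/-- Condition N1: `X ∩ X⁻¹ = ∅`. -/
def N1 (X : Set (T ≃g T)) : Prop := X ∩ X⁻¹ = ∅

/-- Condition N2: `|xy| ≥ max (|x|, |y|)` for `x, y ∈ X^±` with `x ≠ y⁻¹`. -/
def N2 (X : Set (T ≃g T)) : Prop :=
  ∀ x ∈ Xpm T X, ∀ y ∈ Xpm T X, x ≠ y⁻¹ →
    max (nrm T v0 x) (nrm T v0 y) ≤ nrm T v0 (x * y)

/-- Condition N3: `|xyz| > |x| + |z| - |y|` for suitable `x, y, z ∈ X^±`. -/
def N3 (X : Set (T ≃g T)) : Prop :=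
  ∀ x ∈ Xpm T X, ∀ y ∈ Xpm T X, ∀ z ∈ Xpm T X, x ≠ y⁻¹ → y ≠ z⁻¹ →
    (nrm T v0 x : ℤ) + (nrm T v0 z : ℤ) - (nrm T v0 y : ℤ) < (nrm T v0 (x * y * z) : ℤ)

/-- Condition N2′: `2δ(x⁻¹, y) ≤ min (|x|, |y|)`. -/
noncomputable def N2' (X : Set (T ≃g T)) : Prop :=
  ∀ x ∈ Xpm T X, ∀ y ∈ Xpm T X, x ≠ y⁻¹ →
    2 * dlt T v0 x⁻¹ y ≤ min (nrm T v0 x : ℚ) (nrm T v0 y : ℚ)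

/-- Condition N3′: `δ(x⁻¹, y) + δ(y⁻¹, z) < |y|`. -/
noncomputable def N3' (X : Set (T ≃g T)) : Prop :=
  ∀ x ∈ Xpm T X, ∀ y ∈ Xpm T X, ∀ z ∈ Xpm T X, x ≠ y⁻¹ → y ≠ z⁻¹ →
    dlt T v0 x⁻¹ y + dlt T v0 y⁻¹ z < (nrm T v0 y : ℚ)

/-- `X` is N-reduced: no nontrivial elliptic elements, and N1, N2, N3 hold. -/
def NReduced (X : Set (T ≃g T)) : Prop :=
  (∀ x ∈ X, x ≠ 1 → ¬ IsElliptic T x) ∧ N1 T X ∧ N2 T v0 X ∧ N3 T v0 X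

/-- `H(g)`: the vertex set of the initial segment of `[v0, g·v0]` of length `⌊|g|/2⌋`. -/
def halfSet (g : T ≃g T) : Set V :=
  {x : V | x ∈ seg T v0 (g v0) ∧ T.dist v0 x ≤ nrm T v0 g / 2}

/-- The endpoint of `H(g)`: the vertex on `[v0, g·v0]` at distance `⌊|g|/2⌋` from `v0`.
(Since paths in a tree starting at `v0` are uniquely determined by their endpoints, we
identify the path `H(g)` with this vertex.) -/
noncomputable def halfVertex (g : T ≃g T) : V :=
  letI := Classical.dec (∃ m, m ∈ seg T v0 (g v0) ∧ T.dist v0 m = nrm T v0 g / 2)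
  if h : ∃ m, m ∈ seg T v0 (g v0) ∧ T.dist v0 m = nrm T v0 g / 2 then h.choose else v0

/-- `X` is a free basis of `⟨X⟩`: the homomorphism from the free group on `X` induced
by the inclusion is an isomorphism onto `⟨X⟩`. -/
def IsFreeBasis (X : Set (T ≃g T)) : Prop :=
  Function.Injective (FreeGroup.lift (fun x : X => (x : T ≃g T))) ∧
  MonoidHom.range (FreeGroup.lift (fun x : X => (x : T ≃g T))) = Subgroup.closure X

/-- A subgroup of `Aut T` is discrete iff some finite set of vertices has trivial
pointwise stabilizer. -/
def IsDiscrete (G : Subgroup (T ≃g T)) : Prop :=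
  ∃ F : Finset V, ∀ g ∈ G, (∀ v ∈ F, g v = v) → g = 1

end Defs

section Order

variable (T : SimpleGraph V) (v0 : V)

/-- The assumed properties of the chosen well-ordering of paths starting at `v0`
(paths from `v0` are identified with their endpoints): it is a well-order, shorter
paths precede longer paths, and it is lexicographic. -/
structure IsPathOrder (lt : V → V → Prop) : Prop where
  wellOrder : IsWellOrder V lt
  short : ∀ u w : V, T.dist v0 u < T.dist v0 w → lt u w
  lex : ∀ u w : V, T.dist v0 u = T.dist v0 w → ∀ u' w' : V,
    u' ∈ seg T v0 u → w' ∈ seg T v0 w → T.dist v0 u' = T.dist v0 w' → lt u' w' → lt u w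

/-- The ordering `≺` on two-element sets of paths (identified with their endpoints):
`A ≺ B` iff `A ≠ B` and the least element of the symmetric difference lies in `A`. -/
def pairLt (lt : V → V → Prop) (A B : Set V) : Prop :=
  A ≠ B ∧ ∃ m ∈ (A \ B) ∪ (B \ A), m ∈ A ∧ ∀ x ∈ (A \ B) ∪ (B \ A), x ≠ m → lt m x

/-- `g ≺ h` iff `|g| = |h|` and `{H(g), H(g⁻¹)} ≺ {H(h), H(h⁻¹)}`. -/
noncomputable def autPrec (lt : V → V → Prop) (g h : T ≃g T) : Prop :=
  nrm T v0 g = nrm T v0 h ∧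
    pairLt lt {halfVertex T v0 g, halfVertex T v0 g⁻¹}
      {halfVertex T v0 h, halfVertex T v0 h⁻¹}

/-- `g <* h` iff `|g| < |h|` or `g ≺ h`. -/
noncomputable def autLtStar (lt : V → V → Prop) (g h : T ≃g T) : Prop :=
  nrm T v0 g < nrm T v0 h ∨ autPrec T v0 lt g h

/-- Condition N4: `x <* xy` for all `x, y ∈ X^±` with `x ≠ y⁻¹`. -/
noncomputable def N4 (lt : V → V → Prop) (X : Set (T ≃g T)) : Prop :=
  ∀ x ∈ Xpm T X, ∀ y ∈ Xpm T X, x ≠ y⁻¹ → autLtStar T v0 lt x (x * y)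

/-- `X` is strongly N-reduced (w.r.t. `v0` and `<*`): a free basis satisfying N1 and N4. -/
noncomputable def StronglyNReduced (lt : V → V → Prop) (X : Set (T ≃g T)) : Prop :=
  IsFreeBasis T X ∧ N1 T X ∧ N4 T v0 lt X

end Order

section Words

variable (T : SimpleGraph V)

/-- The product `a₀ a₁ ⋯ a_{k-1}`. -/
def wordProd (a : ℕ → T ≃g T) (k : ℕ) : T ≃g T := ((List.range k).map a).prod

/-- The product `aᵢ a_{i+1} ⋯ a_j` (inclusive endpoints). -/
def segProd (a : ℕ → T ≃g T) (i j : ℕ) : T ≃g T := ((List.range' i (j + 1 - i)).map a).prod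

/-- `a 0, …, a (n-1)` is a reduced word in `X`: each letter lies in `X^±` and no letter
is followed by its inverse. -/
def IsReducedWord (X : Set (T ≃g T)) (a : ℕ → T ≃g T) (n : ℕ) : Prop :=
  (∀ i < n, a i ∈ Xpm T X) ∧ ∀ i, i + 1 < n → a (i + 1) ≠ (a i)⁻¹

end Words

section Geometry

variable (T : SimpleGraph V) (v0 : V)

/-- `p` is a nearest-point projection of `w` to the set `A`. -/
def NearestPt (A : Set V) (w p : V) : Prop :=
  p ∈ A ∧ ∀ z ∈ A, T.dist w p ≤ T.dist w z

/-- Distance between two sets of vertices. -/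
noncomputable def setDist (A B : Set V) : ℕ :=
  sInf {n : ℕ | ∃ a ∈ A, ∃ b ∈ B, T.dist a b = n}

/-- A vertex `p` of the axis of `g` lies in the half-open interval `U_g^0`
(of radius `l(g)/2` about the projection `c` of `v0`, closed at the `<`-smaller end):
either `d(c,p) < l(g)/2`, or `d(c,p) = l(g)/2` and `p` precedes the opposite boundary
vertex in the ordering. -/
def inU0 (lt : V → V → Prop) (g : T ≃g T) (c p : V) : Prop :=
  2 * T.dist c p < tl T g ∨
    (2 * T.dist c p = tl T g ∧
      ∀ p', p' ∈ axisSet T g → T.dist c p' = T.dist c p → p' ≠ p → lt p p')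

/-- `X` admits a fundamental system: `X` has no nontrivial elliptic elements and for all
distinct `g, h ∈ X`, the projection of the axis of `h` to the axis of `g` is contained
in `U_g^0`. -/
def AdmitsFundamentalSystem (lt : V → V → Prop) (X : Set (T ≃g T)) : Prop :=
  (∀ x ∈ X, x ≠ 1 → ¬ IsElliptic T x) ∧
  ∀ g ∈ X, ∀ h ∈ X, g ≠ h → ∀ c z p : V,
    NearestPt T (axisSet T g) v0 c → z ∈ axisSet T h →
    NearestPt T (axisSet T g) z p → inU0 T lt g c p

end Geometry


/-!
Write `|g| = d(v0, g v0)` and `o(g, h) = |g| + |h| - |g h|`, twice the Gromov product of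
`g⁻¹ v0` and `h v0` at `v0`. Trees are `0`-hyperbolic, so N3 says that in a reduced word the
overlaps of a letter with its two neighbours are disjoint, `o(x, y) + o(y, z) < 2 |y|`, and then
the isosceles property of Gromov products shows that the overlap of two reduced words is the
overlap of the two letters where they meet. For a cyclically reduced word `W` with first letter
`h` and last letter `l` this gives `|W²| = 2 |W| - o(l, h)`, and an induction along `W` gives
`o(l, h) < |W|`; hence `|W²| > |W|`. An elliptic `g` has `|g²| ≤ |g|`, and every nontrivial
element of the free group is conjugate to a cyclically reduced word, so it maps to a hyperbolic
automorphism, in particular not to `1`.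
-/

section TreeGeometry

open SimpleGraph

variable {G : SimpleGraph V} {u v w x y : V}

theorem _root_.SimpleGraph.Walk.dist_add_dist_of_mem_support {p : G.Walk u v}
    (hp : p.length = G.dist u v) (hx : x ∈ p.support) :
    G.dist u x + G.dist x v = G.dist u v := by
  classical
  rw [← length_eq_dist_of_subwalk hp (p.isSubwalk_takeUntil hx),
    ← length_eq_dist_of_subwalk hp (p.isSubwalk_dropUntil hx), ← hp, ← Walk.length_append,
    p.take_spec hx]

theorem _root_.SimpleGraph.Walk.IsPath.append_of_support_inter {p : G.Walk u v}
    {q : G.Walk v w} (hp : p.IsPath) (hq : q.IsPath)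
    (hpq : ∀ x ∈ p.support, x ∈ q.support → x = v) : (p.append q).IsPath := by
  rw [Walk.isPath_def, Walk.support_append]
  have hq' := hq.support_nodup
  rw [← q.cons_tail_support, List.nodup_cons] at hq'
  refine hp.support_nodup.append hq'.2 fun x hxp hxq => hq'.1 ?_
  have hxv := hpq x hxp (q.cons_tail_support ▸ List.mem_cons_of_mem _ hxq)
  exact hxv ▸ hxq

theorem _root_.SimpleGraph.IsTree.length_eq_dist (hG : G.IsTree) {p : G.Walk u v}
    (hp : p.IsPath) : p.length = G.dist u v := by
  obtain ⟨q, hq, hql⟩ := hG.connected.exists_path_of_dist u v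
  rw [← hql, Subtype.mk.inj ((hG.isAcyclic.subsingleton_path u v).elim ⟨p, hp⟩ ⟨q, hq⟩)]

theorem _root_.SimpleGraph.IsTree.mem_support_of_dist_add_dist (hG : G.IsTree)
    {p : G.Walk u v} (hp : p.IsPath) (hx : G.dist u x + G.dist x v = G.dist u v) :
    x ∈ p.support := by
  obtain ⟨q₁, hq₁⟩ := hG.connected.exists_walk_length_eq_dist u x
  obtain ⟨q₂, hq₂⟩ := hG.connected.exists_walk_length_eq_dist x v
  have hq : (q₁.append q₂).IsPath :=
    (q₁.append q₂).isPath_of_length_eq_dist (by rw [Walk.length_append, hq₁, hq₂, hx])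
  rw [← Subtype.mk.inj ((hG.isAcyclic.subsingleton_path u v).elim ⟨_, hq⟩ ⟨p, hp⟩),
    Walk.mem_support_append_iff]
  exact Or.inr q₂.start_mem_support

theorem _root_.SimpleGraph.IsTree.dist_add_dist_of_le (hG : G.IsTree) {b : V}
    (hx : G.dist w x + G.dist x b = G.dist w b) (hy : G.dist w y + G.dist y b = G.dist w b)
    (hle : G.dist w x ≤ G.dist w y) : G.dist w x + G.dist x y = G.dist w y := by
  classical
  obtain ⟨P, hP, hPl⟩ := hG.connected.exists_path_of_dist w b
  have hxP := hG.mem_support_of_dist_add_dist hP hx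
  have hyP : y ∈ (P.takeUntil x hxP).support ∨ y ∈ (P.dropUntil x hxP).support := by
    rw [← Walk.mem_support_append_iff, P.take_spec hxP]
    exact hG.mem_support_of_dist_add_dist hP hy
  rcases hyP with hy' | hy'
  · have := (P.takeUntil x hxP).dist_add_dist_of_mem_support
      (length_eq_dist_of_subwalk hPl (P.isSubwalk_takeUntil hxP)) hy'
    have := dist_comm (G := G) (u := x) (v := y)
    omega
  · have := (P.dropUntil x hxP).dist_add_dist_of_mem_support
      (length_eq_dist_of_subwalk hPl (P.isSubwalk_dropUntil hxP)) hy'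
    omega

theorem _root_.SimpleGraph.IsTree.exists_median (hG : G.IsTree) (a b c : V) :
    ∃ m, G.dist a m + G.dist m b = G.dist a b ∧ G.dist a m + G.dist m c = G.dist a c ∧
      G.dist b m + G.dist m c = G.dist b c := by
  classical
  obtain ⟨P, hP, hPl⟩ := hG.connected.exists_path_of_dist b c
  obtain ⟨m, hmP, hmin⟩ := P.support.toFinset.exists_min_image (G.dist a)
    ⟨b, List.mem_toFinset.mpr P.start_mem_support⟩
  rw [List.mem_toFinset] at hmP
  obtain ⟨Q, hQ, hQl⟩ := hG.connected.exists_path_of_dist a m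
  -- `m` is a point of `P` nearest to `a`, so a geodesic from `a` to `m` continues along `P`.
  have key : ∀ z (R : G.Walk m z), R.IsPath → (∀ x ∈ R.support, x ∈ P.support) →
      G.dist a m + G.dist m z = G.dist a z := by
    intro z R hR hRP
    have hQR := hQ.append_of_support_inter hR fun x hxQ hxR => by
      have h₁ := Q.dist_add_dist_of_mem_support hQl hxQ
      have h₂ := hmin x (List.mem_toFinset.mpr (hRP x hxR))
      exact hG.connected.dist_eq_zero_iff.mp (by omega)
    rw [← hQl, ← hG.length_eq_dist hR, ← Walk.length_append, hG.length_eq_dist hQR]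
  refine ⟨m, ?_, key c _ (hP.dropUntil hmP) fun x hx =>
    P.support_dropUntil_subset_support hmP hx, P.dist_add_dist_of_mem_support hPl hmP⟩
  refine key b _ (hP.takeUntil hmP).reverse fun x hx =>
    P.support_takeUntil_subset_support hmP ?_
  rwa [Walk.support_reverse, List.mem_reverse] at hx

end TreeGeometry

section Gromov

variable {T : SimpleGraph V}

/-- Twice the Gromov product `(a | b)_w`, so that it stays in `ℤ`. -/
def gromovProd (T : SimpleGraph V) (w a b : V) : ℤ := T.dist w a + T.dist w b - T.dist a b

theorem gromovProd_comm (w a b : V) : gromovProd T w a b = gromovProd T w b a := by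
  simp only [gromovProd, SimpleGraph.dist_comm (u := a), add_comm]

theorem min_gromovProd_le (hT : T.IsTree) (w a b c : V) :
    min (gromovProd T w a b) (gromovProd T w b c) ≤ gromovProd T w a c := by
  obtain ⟨m₁, h₁a, h₁b, h₁ab⟩ := hT.exists_median w a b
  obtain ⟨m₂, h₂b, h₂c, h₂bc⟩ := hT.exists_median w b c
  have t₁ : T.dist a c ≤ T.dist a m₁ + T.dist m₁ c := hT.connected.dist_triangle
  have t₂ : T.dist m₁ c ≤ T.dist m₁ m₂ + T.dist m₂ c := hT.connected.dist_triangle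
  have c₁ := SimpleGraph.dist_comm (G := T) (u := m₁) (v := a)
  have c₂ := SimpleGraph.dist_comm (G := T) (u := m₂) (v := m₁)
  have c₃ := SimpleGraph.dist_comm (G := T) (u := m₂) (v := b)
  simp only [gromovProd]
  rcases le_total (T.dist w m₁) (T.dist w m₂) with hle | hle
  · have := hT.dist_add_dist_of_le h₁b h₂b hle
    exact (min_le_left _ _).trans (by omega)
  · have := hT.dist_add_dist_of_le h₂b h₁b hle
    exact (min_le_right _ _).trans (by omega)

theorem gromovProd_eq_of_lt (hT : T.IsTree) {w a b c : V}
    (h : gromovProd T w a b < gromovProd T w b c) :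
    gromovProd T w a c = gromovProd T w a b := by
  have h₁ := min_gromovProd_le hT w a b c
  have h₂ := min_gromovProd_le hT w b c a
  rw [gromovProd_comm w c a, gromovProd_comm w b a] at h₂
  rw [min_eq_left h.le] at h₁
  exact le_antisymm (not_lt.1 fun h' => h₂.not_gt (lt_min h h')) h₁

end Gromov

section Isometries

variable {T : SimpleGraph V}

theorem _root_.SimpleGraph.Iso.dist_eq (hT : T.Connected) (g : T ≃g T) (u v : V) :
    T.dist (g u) (g v) = T.dist u v := by
  have key : ∀ (h : T ≃g T) (x y : V), T.dist (h x) (h y) ≤ T.dist x y := fun h x y => by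
    obtain ⟨p, hp⟩ := hT.exists_walk_length_eq_dist x y
    have := SimpleGraph.dist_le (p.map h.toHom)
    rwa [SimpleGraph.Walk.length_map, hp] at this
  refine (key g u v).antisymm ?_
  simpa only [RelIso.inv_apply_self] using key g⁻¹ (g u) (g v)

variable (hT : T.Connected) (v0 : V)

include hT in
theorem dist_inv_apply (g h : T ≃g T) : T.dist (g⁻¹ v0) (h v0) = nrm T v0 (g * h) := by
  rw [← g.dist_eq hT, RelIso.apply_inv_self]
  rfl

include hT in
theorem nrm_inv (g : T ≃g T) : nrm T v0 g⁻¹ = nrm T v0 g := by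
  rw [nrm, SimpleGraph.dist_comm, ← g.dist_eq hT, RelIso.apply_inv_self]
  rfl

/-- Twice `dlt T v0 g⁻¹ h`, kept in `ℤ`. -/
def overlap (T : SimpleGraph V) (v0 : V) (g h : T ≃g T) : ℤ :=
  nrm T v0 g + nrm T v0 h - nrm T v0 (g * h)

theorem overlap_mul_left (a g h : T ≃g T) :
    overlap T v0 (a * g) h = overlap T v0 g h + overlap T v0 a (g * h) - overlap T v0 a g := by
  simp only [overlap, mul_assoc]
  ring

include hT in
theorem overlap_eq_gromovProd (g h : T ≃g T) :
    overlap T v0 g h = gromovProd T v0 (g⁻¹ v0) (h v0) := by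
  rw [overlap, gromovProd, dist_inv_apply hT, ← nrm_inv hT v0 g]
  rfl

include hT in
theorem gromovProd_apply_mul (h k : T ≃g T) :
    gromovProd T v0 (h v0) ((h * k) v0) = 2 * nrm T v0 h - overlap T v0 h k := by
  have : T.dist (h v0) ((h * k) v0) = nrm T v0 k := h.dist_eq hT _ _
  rw [gromovProd, this, overlap]
  simp only [nrm]
  ring

theorem overlap_mul_right_eq (hT : T.IsTree) {g h k : T ≃g T}
    (hlt : overlap T v0 g h + overlap T v0 h k < 2 * nrm T v0 h) :
    overlap T v0 g (h * k) = overlap T v0 g h := by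
  rw [overlap_eq_gromovProd hT.connected] at hlt ⊢
  rw [overlap_eq_gromovProd hT.connected]
  refine gromovProd_eq_of_lt hT ?_
  rw [gromovProd_apply_mul hT.connected]
  linarith

end Isometries

section Elliptic

variable {T : SimpleGraph V}

theorem nrm_mul_self_add_dist_le (hT : T.IsTree) (v0 : V) {g : T ≃g T} {u : V}
    (hu : (g * g) u = u) :
    nrm T v0 (g * g) + T.dist u (g v0) ≤ nrm T v0 g + T.dist u v0 := by
  have hmin := min_gromovProd_le hT u v0 (g v0) ((g * g) v0)
  have h₁ : T.dist u ((g * g) v0) = T.dist u v0 := by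
    conv_lhs => rw [← hu]
    exact (g * g).dist_eq hT.connected u v0
  have h₂ : T.dist (g v0) ((g * g) v0) = nrm T v0 g := g.dist_eq hT.connected v0 (g v0)
  simp only [gromovProd, h₁, h₂] at hmin
  simp only [nrm] at *
  omega

theorem nrm_mul_self_le_of_isElliptic (hT : T.IsTree) (v0 : V) {g : T ≃g T}
    (hg : IsElliptic T g) : nrm T v0 (g * g) ≤ nrm T v0 g := by
  rcases hg with ⟨u, hu⟩ | ⟨u, w, -, hu, hw⟩
  · have h := nrm_mul_self_add_dist_le hT v0 (show g (g u) = u by rw [hu, hu])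
    rw [← g.dist_eq hT.connected u v0, hu] at h
    omega
  · have hu' := nrm_mul_self_add_dist_le hT v0 (show g (g u) = u by rw [hu, hw])
    have hw' := nrm_mul_self_add_dist_le hT v0 (show g (g w) = w by rw [hw, hu])
    have e₁ : T.dist w (g v0) = T.dist u v0 := hu ▸ g.dist_eq hT.connected u v0
    have e₂ : T.dist u (g v0) = T.dist w v0 := hw ▸ g.dist_eq hT.connected w v0
    omega

theorem IsElliptic.conj {g : T ≃g T} (hg : IsElliptic T g) (k : T ≃g T) :
    IsElliptic T (k * g * k⁻¹) := by
  rcases hg with ⟨u, hu⟩ | ⟨u, w, huw, hu, hw⟩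
  · exact Or.inl ⟨k u, by simp [hu]⟩
  · exact Or.inr ⟨k u, k w, k.map_adj_iff.mpr huw, by simp [hu], by simp [hw]⟩

end Elliptic

section ReducedWords

variable {T : SimpleGraph V} {X : Set (T ≃g T)}

def IsReducedList (X : Set (T ≃g T)) (L : List (T ≃g T)) : Prop :=
  (∀ g ∈ L, g ∈ Xpm T X) ∧ L.IsChain fun g h => g ≠ h⁻¹

theorem IsReducedList.infix {L₁ L : List (T ≃g T)} (hL : IsReducedList X L) (h : L₁ <:+: L) :
    IsReducedList X L₁ :=
  ⟨fun g hg => hL.1 g (h.subset hg), hL.2.infix h⟩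

theorem isReducedList_cons_cons {a b : T ≃g T} {L : List (T ≃g T)} :
    IsReducedList X (a :: b :: L) ↔
      a ∈ Xpm T X ∧ a ≠ b⁻¹ ∧ IsReducedList X (b :: L) := by
  simp only [IsReducedList, List.mem_cons, List.isChain_cons_cons, forall_eq_or_imp]
  tauto

variable (hT : T.IsTree) {v0 : V} (hN3 : N3 T v0 X)
include hT hN3

/-- Condition N3 says that the overlaps of `y` with its two neighbours are disjoint. -/
theorem overlap_add_overlap_lt {x y z : T ≃g T} (hx : x ∈ Xpm T X) (hy : y ∈ Xpm T X)
    (hz : z ∈ Xpm T X) (hxy : x ≠ y⁻¹) (hyz : y ≠ z⁻¹) :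
    overlap T v0 x y + overlap T v0 y z < 2 * nrm T v0 y := by
  have hN := hN3 x hx y hy z hz hxy hyz
  have hmin := min_gromovProd_le hT v0 (x⁻¹ v0) (y v0) ((y * z) v0)
  rw [gromovProd_apply_mul hT.connected, ← overlap_eq_gromovProd hT.connected,
    ← overlap_eq_gromovProd hT.connected] at hmin
  simp only [overlap] at hmin ⊢
  rw [mul_assoc] at hN
  omega

theorem overlap_prod_cons : ∀ {a b : T ≃g T} {L : List (T ≃g T)},
    IsReducedList X (a :: b :: L) → overlap T v0 a (b :: L).prod = overlap T v0 a b
  | a, b, [], _ => by rw [List.prod_singleton]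
  | a, b, c :: L, hL => by
    obtain ⟨ha, hab, hbL⟩ := isReducedList_cons_cons.1 hL
    obtain ⟨hb, hbc, hcL⟩ := isReducedList_cons_cons.1 hbL
    have hN := overlap_add_overlap_lt hT hN3 ha hb (hcL.1 c List.mem_cons_self) hab hbc
    rw [← overlap_prod_cons hbL] at hN
    rw [List.prod_cons, overlap_mul_right_eq v0 hT hN]

theorem overlap_prod_prod : ∀ {a b : T ≃g T} {U W : List (T ≃g T)},
    IsReducedList X (a :: U ++ b :: W) →
      overlap T v0 (a :: U).prod (b :: W).prod =
        overlap T v0 ((a :: U).getLast (List.cons_ne_nil _ _)) b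
  | a, b, [], W, h => by simpa using overlap_prod_cons hT hN3 h
  | a, b, c :: U, W, h => by
    have hcU : IsReducedList X (c :: U ++ b :: W) := h.infix (List.suffix_cons _ _).isInfix
    have hacU : IsReducedList X (a :: c :: U) :=
      h.infix (List.prefix_append (a :: c :: U) (b :: W)).isInfix
    rw [List.prod_cons, overlap_mul_left, List.getLast_cons (List.cons_ne_nil _ _),
      ← List.prod_append, overlap_prod_prod hcU, overlap_prod_cons hT hN3 hacU]
    rw [List.cons_append, overlap_prod_cons hT hN3 (L := U ++ b :: W) h]
    ring

theorem overlap_head_add_overlap_getLast_lt : ∀ {x h y : T ≃g T} {L : List (T ≃g T)},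
    IsReducedList X (h :: L) → x ∈ Xpm T X → y ∈ Xpm T X → x ≠ h⁻¹ →
      (h :: L).getLast (List.cons_ne_nil _ _) ≠ y⁻¹ →
      overlap T v0 x h + overlap T v0 ((h :: L).getLast (List.cons_ne_nil _ _)) y <
        2 * nrm T v0 (h :: L).prod
  | x, h, y, [], hL, hx, hy, hxh, hhy => by
    simpa using overlap_add_overlap_lt hT hN3 hx (hL.1 h List.mem_cons_self) hy hxh hhy
  | x, h, y, c :: L, hL, hx, hy, hxh, hly => by
    obtain ⟨hh, hhc, hcL⟩ := isReducedList_cons_cons.1 hL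
    rw [List.getLast_cons (List.cons_ne_nil _ _)] at hly ⊢
    have ih := overlap_head_add_overlap_getLast_lt hcL hh hy hhc hly
    have hxhc := overlap_add_overlap_lt hT hN3 hx hh (hcL.1 c List.mem_cons_self) hxh hhc
    have hhL := overlap_prod_cons hT hN3 hL
    rw [List.prod_cons]
    simp only [overlap] at ih hxhc hhL ⊢
    omega

/-- `W ++ W` being reduced says that `W` is cyclically reduced. -/
theorem nrm_lt_nrm_prod_mul_self {W : List (T ≃g T)} (hW : W ≠ [])
    (hWW : IsReducedList X (W ++ W)) :
    nrm T v0 W.prod < nrm T v0 (W.prod * W.prod) := by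
  obtain ⟨h, L, rfl⟩ := List.exists_cons_of_ne_nil hW
  have hL : IsReducedList X (h :: L) := hWW.infix (List.prefix_append _ _).isInfix
  have hlast := hL.1 _ (List.getLast_mem (List.cons_ne_nil h L))
  have hjunc : (h :: L).getLast (List.cons_ne_nil _ _) ≠ h⁻¹ := by
    have := (List.isChain_append.1 hWW.2).2.2
    exact this _ (List.getLast?_eq_some_getLast _) h rfl
  have hQ := overlap_head_add_overlap_getLast_lt hT hN3 hL hlast (hL.1 h List.mem_cons_self)
    hjunc hjunc
  have hsq := overlap_prod_prod hT hN3 hWW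
  simp only [overlap] at hQ hsq
  omega

end ReducedWords

section FreeGroup

variable {T : SimpleGraph V} {X : Set (T ≃g T)}

def letter (X : Set (T ≃g T)) (p : X × Bool) : T ≃g T := cond p.2 p.1 (p.1 : T ≃g T)⁻¹

theorem lift_mk_eq_prod (L : List (X × Bool)) :
    FreeGroup.lift (fun x : X => (x : T ≃g T)) (FreeGroup.mk L) = (L.map (letter X)).prod :=
  FreeGroup.lift_mk

theorem letter_mem_xpm (p : X × Bool) : letter X p ∈ Xpm T X := by
  obtain ⟨⟨x, hx⟩, _ | _⟩ := p
  · exact Or.inr (Set.inv_mem_inv.mpr hx)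
  · exact Or.inl hx

theorem letter_ne_inv_letter (hN1 : N1 T X) {p q : X × Bool} (hpq : p.1 = q.1 → p.2 = q.2) :
    letter X p ≠ (letter X q)⁻¹ := by
  have hX : ∀ x ∈ X, x⁻¹ ∉ X := fun x hx hx' => (Set.eq_empty_iff_forall_notMem.1 hN1) x
    ⟨hx, Set.mem_inv.2 hx'⟩
  obtain ⟨⟨x, hx⟩, _ | _⟩ := p <;> obtain ⟨⟨y, hy⟩, _ | _⟩ := q <;>
    simp only [letter, cond_true, cond_false, inv_inv, ne_eq, inv_inj] at hpq ⊢ <;>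
    rintro rfl
  exacts [hX _ hx hy, by simp_all, by simp_all, hX _ hy hx]

theorem isReducedList_map_letter (hN1 : N1 T X) {L : List (X × Bool)}
    (hL : FreeGroup.IsReduced L) : IsReducedList X (L.map (letter X)) :=
  ⟨fun g hg => by
    obtain ⟨p, -, rfl⟩ := List.mem_map.1 hg
    exact letter_mem_xpm p,
    List.isChain_map _ |>.2 (hL.imp fun _ _ => letter_ne_inv_letter hN1)⟩

theorem isHyperbolic_lift (hT : T.IsTree) {v0 : V} (hN1 : N1 T X) (hN3 : N3 T v0 X)
    {w : FreeGroup X} (hw : w ≠ 1) :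
    IsHyperbolic T (FreeGroup.lift (fun x : X => (x : T ≃g T)) w) := by
  classical
  set R := FreeGroup.reduceCyclically w.toWord
  set C := FreeGroup.reduceCyclically.conjugator w.toWord
  have hw' : w = FreeGroup.mk C * FreeGroup.mk R * (FreeGroup.mk C)⁻¹ := by
    rw [FreeGroup.inv_mk, FreeGroup.mul_mk, FreeGroup.mul_mk,
      FreeGroup.reduceCyclically.conj_conjugator_reduceCyclically, FreeGroup.mk_toWord]
  have hR : R.map (letter X) ≠ [] := by
    rw [Ne, List.map_eq_nil_iff]
    rintro hR
    rw [hR, ← FreeGroup.one_eq_mk, mul_one, mul_inv_cancel] at hw'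
    exact hw hw'
  have hRR : IsReducedList X (R.map (letter X) ++ R.map (letter X)) := by
    rw [← List.map_append]
    refine isReducedList_map_letter hN1 ?_
    simpa using ((FreeGroup.reduceCyclically.isCyclicallyReduced
      FreeGroup.isReduced_toWord).flatten_replicate 2).isReduced
  intro hell
  have hellR := hell.conj (FreeGroup.lift (fun x : X => (x : T ≃g T)) (FreeGroup.mk C))⁻¹
  rw [hw', map_mul, map_mul, map_inv] at hellR
  simp only [inv_inv, mul_assoc, inv_mul_cancel, mul_one, inv_mul_cancel_left,
    lift_mk_eq_prod] at hellR
  exact (nrm_lt_nrm_prod_mul_self hT hN3 hR hRR).not_ge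
    (nrm_mul_self_le_of_isElliptic hT v0 hellR)

end FreeGroup

theorem statement_6_general {V : Type*} (T : SimpleGraph V) (hT : T.IsTree) (v0 : V)
    (X : Set (T ≃g T)) (hX : NReduced T v0 X) :
    PurelyHyperbolic T (Subgroup.closure X) ∧ IsFreeBasis T X := by
  set φ := FreeGroup.lift (fun x : X => (x : T ≃g T))
  have hrange : φ.range = Subgroup.closure X := (FreeGroup.closure_eq_range X).symm
  have hφ : ∀ w ≠ 1, IsHyperbolic T (φ w) := fun w hw =>
    isHyperbolic_lift hT hX.2.1 hX.2.2.2 hw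
  refine ⟨?_, ?_, hrange⟩
  · rintro g hg hg1
    obtain ⟨w, rfl⟩ := hrange ▸ hg
    exact hφ w fun hw => hg1 (by rw [hw, map_one])
  · refine (injective_iff_map_eq_one φ).2 fun w hw => by_contra fun hw1 => hφ w hw1 ?_
    exact hw ▸ Or.inl ⟨v0, rfl⟩

/-- an N-reduced set generates a purely hyperbolic group freely. -/
theorem statement_6 {V : Type*} (T : SimpleGraph V) (hT : T.IsTree) (v0 : V)
    (X : Set (T ≃g T)) (hXfin : X.Finite) (hX : NReduced T v0 X) :
    PurelyHyperbolic T (Subgroup.closure X) ∧ IsFreeBasis T X :=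
  statement_6_general T hT v0 X hX

end TreePaper

end
end

section
/- Let x, y ∈ Aut(T). If 2δ(x⁻¹, y) ≤ min(|x|, |y|) and |xy| = |x|, then H(x) = H(xy). -/
noncomputable section

open Pointwise

namespace TreePaper

variable {V : Type*}

section Statement7Aux

open SimpleGraph

variable {V : Type*} {T : SimpleGraph V}

private lemma path_length (hT : T.IsTree) {u w : V} (P : T.Walk u w) (hP : P.IsPath) :
    P.length = T.dist u w := by
  obtain ⟨Q, hQ, hQl⟩ := hT.isConnected.exists_path_of_dist u w
  rw [(hT.existsUnique_path u w).unique hP hQ, hQl]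

private lemma dist_add_of_mem (hT : T.IsTree) {u w z : V} (P : T.Walk u w) (hP : P.IsPath)
    (hz : z ∈ P.support) : T.dist u z + T.dist z w = T.dist u w := by
  classical
  have h1 := path_length hT (P.takeUntil z hz) (hP.takeUntil hz)
  have h2 := path_length hT (P.dropUntil z hz) (hP.dropUntil hz)
  have h3 := path_length hT P hP
  have h4 : (P.takeUntil z hz).length + (P.dropUntil z hz).length = P.length := by
    have := congrArg Walk.length (P.take_spec hz)
    rwa [Walk.length_append] at this
  omega

private lemma isPath_append {u v w : V} {P : T.Walk u v} {Q : T.Walk v w}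
    (hP : P.IsPath) (hQ : Q.IsPath)
    (h : ∀ z, z ∈ P.support → z ∈ Q.support → z = v) : (P.append Q).IsPath := by
  rw [Walk.isPath_def, Walk.support_append]
  refine List.Nodup.append hP.support_nodup (hQ.support_nodup.tail) ?_
  intro z hz1 hz2
  have hzQ : z ∈ Q.support := List.mem_of_mem_tail hz2
  have hzv : z = v := h z hz1 hzQ
  subst hzv
  have := hQ.support_nodup
  rw [Q.support_eq_cons] at this
  exact (List.nodup_cons.mp this).1 hz2

private lemma exists_path_through (hT : T.IsTree) {u w p : V}
    (h : T.dist u p + T.dist p w = T.dist u w) :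
    ∃ P : T.Walk u w, P.IsPath ∧ p ∈ P.support := by
  obtain ⟨A, hA, hAl⟩ := hT.isConnected.exists_path_of_dist u p
  obtain ⟨B, hB, hBl⟩ := hT.isConnected.exists_path_of_dist p w
  refine ⟨A.append B, ?_, by rw [Walk.mem_support_append_iff]; exact Or.inl A.end_mem_support⟩
  apply isPath_append hA hB
  intro z hzA hzB
  have h1 := dist_add_of_mem hT A hA hzA
  have h2 := dist_add_of_mem hT B hB hzB
  have tri := hT.isConnected.dist_triangle (u := u) (v := z) (w := w)
  have comm : T.dist z p = T.dist p z := T.dist_comm ..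
  have hz0 : T.dist z p = 0 := by omega
  exact (hT.isConnected.dist_eq_zero_iff.mp hz0)

private lemma seg_mono (hT : T.IsTree) {u a p m : V}
    (hp : T.dist u p + T.dist p a = T.dist u a)
    (hm : T.dist u m + T.dist m a = T.dist u a) (hle : T.dist u p ≤ T.dist u m) :
    T.dist u p + T.dist p m = T.dist u m := by
  classical
  obtain ⟨P, hP, hpP⟩ := exists_path_through hT hp
  obtain ⟨Q, hQ, hmQ⟩ := exists_path_through hT hm
  have hPQ : P = Q := (hT.existsUnique_path u a).unique hP hQ
  subst hPQ
  have hsplit := P.take_spec hmQ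
  have : p ∈ (P.takeUntil m hmQ).support ∨ p ∈ (P.dropUntil m hmQ).support := by
    rw [← Walk.mem_support_append_iff, hsplit]; exact hpP
  rcases this with h | h
  · exact dist_add_of_mem hT _ (hP.takeUntil hmQ) h
  · have h2 := dist_add_of_mem hT _ (hP.dropUntil hmQ) h
    have comm : T.dist m p = T.dist p m := T.dist_comm ..
    have hpm : T.dist p m = 0 := by omega
    have : p = m := hT.isConnected.dist_eq_zero_iff.mp hpm
    subst this
    simp [hpm]

private lemma exists_first (hT : T.IsTree) (S : Set V) :
    ∀ {a u : V} (R : T.Walk a u), R.IsPath → u ∈ S →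
      ∃ m, m ∈ R.support ∧ m ∈ S ∧ ∃ R1 : T.Walk a m,
        R1.IsPath ∧ R1.support ⊆ R.support ∧ ∀ z ∈ R1.support, z ∈ S → z = m := by
  intro a u R
  induction R with
  | nil =>
    intro _ hu
    exact ⟨_, by simp, hu, Walk.nil, Walk.IsPath.nil, by simp,
      by intro z hz _; simpa using hz⟩
  | @cons a c u hadj R' ih =>
    intro hR hu
    rw [Walk.cons_isPath_iff] at hR
    by_cases ha : a ∈ S
    · exact ⟨a, Walk.start_mem_support _, ha, Walk.nil, Walk.IsPath.nil,
        by simp, by intro z hz _; simpa using hz⟩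
    · obtain ⟨m, hmR, hmQ, R1, hR1, hsub, hdisj⟩ := ih hR.1 hu
      refine ⟨m, by simp [hmR], hmQ, Walk.cons hadj R1, ?_, ?_, ?_⟩
      · rw [Walk.cons_isPath_iff]
        exact ⟨hR1, fun hc => hR.2 (hsub hc)⟩
      · intro z hz
        rw [Walk.support_cons, List.mem_cons] at hz ⊢
        rcases hz with rfl | hz
        · exact Or.inl rfl
        · exact Or.inr (hsub hz)
      · intro z hz hzQ
        rw [Walk.support_cons, List.mem_cons] at hz
        rcases hz with rfl | hz
        · exact absurd hzQ ha
        · exact hdisj z hz hzQ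

private lemma median (hT : T.IsTree) (u a b : V) :
    ∃ m, T.dist u m + T.dist m a = T.dist u a ∧ T.dist u m + T.dist m b = T.dist u b ∧
      T.dist a m + T.dist m b = T.dist a b := by
  classical
  obtain ⟨Q, hQ, -⟩ := hT.isConnected.exists_path_of_dist u b
  obtain ⟨R, hR, -⟩ := hT.isConnected.exists_path_of_dist a u
  obtain ⟨m, hmR, hmQ, R1, hR1, -, hdisj⟩ :=
    exists_first hT {z | z ∈ Q.support} R hR Q.start_mem_support
  refine ⟨m, ?_, ?_, ?_⟩
  · have := dist_add_of_mem hT R hR hmR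
    have c1 : T.dist a m = T.dist m a := T.dist_comm ..
    have c2 : T.dist a u = T.dist u a := T.dist_comm ..
    have c3 : T.dist m u = T.dist u m := T.dist_comm ..
    omega
  · exact dist_add_of_mem hT Q hQ hmQ
  · have hdrop := hQ.dropUntil hmQ
    have hpath : (R1.append (Q.dropUntil m hmQ)).IsPath := by
      apply isPath_append hR1 hdrop
      intro z hz1 hz2
      exact hdisj z hz1 (Q.support_dropUntil_subset hmQ hz2)
    have hlen := path_length hT _ hpath
    rw [Walk.length_append] at hlen
    rw [path_length hT R1 hR1, path_length hT _ hdrop] at hlen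
    exact hlen

/-- Core geometric lemma. -/
private lemma core (hT : T.IsTree) {u a b p : V}
    (hpa : T.dist u p + T.dist p a = T.dist u a)
    (hle : 2 * T.dist u p + T.dist a b ≤ T.dist u a + T.dist u b) :
    T.dist u p + T.dist p b = T.dist u b := by
  obtain ⟨m, hm1, hm2, hm3⟩ := median hT u a b
  have cma : T.dist m a = T.dist a m := T.dist_comm ..
  have hum : T.dist u p ≤ T.dist u m := by omega
  have hpm := seg_mono hT hpa hm1 hum
  have t1 := hT.isConnected.dist_triangle (u := u) (v := p) (w := b)
  have t2 := hT.isConnected.dist_triangle (u := p) (v := m) (w := b)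
  omega


private lemma iso_dist_le (hT : T.IsTree) (g : T ≃g T) (u v : V) :
    T.dist (g u) (g v) ≤ T.dist u v := by
  obtain ⟨W, -, hW⟩ := hT.isConnected.exists_path_of_dist u v
  calc T.dist (g u) (g v) ≤ (W.map g.toHom).length := SimpleGraph.dist_le _
    _ = T.dist u v := by rw [SimpleGraph.Walk.length_map, hW]

private lemma iso_dist (hT : T.IsTree) (g : T ≃g T) (u v : V) :
    T.dist (g u) (g v) = T.dist u v := by
  refine le_antisymm (iso_dist_le hT g u v) ?_
  have := iso_dist_le hT g⁻¹ (g u) (g v)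
  simpa using this

end Statement7Aux

/-- if 2δ(x⁻¹,y) ≤ min(|x|,|y|) and |xy| = |x|, then H(x) = H(xy). -/
theorem statement_7 {V : Type*} (T : SimpleGraph V) (hT : T.IsTree) (v0 : V)
    (x y : T ≃g T)
    (h1 : 2 * dlt T v0 x⁻¹ y ≤ min (nrm T v0 x : ℚ) (nrm T v0 y : ℚ))
    (h2 : nrm T v0 (x * y) = nrm T v0 x) :
    halfSet T v0 x = halfSet T v0 (x * y) := by
  have hninv : nrm T v0 x⁻¹ = nrm T v0 x := by
    have h := iso_dist hT x v0 (x⁻¹ v0)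
    rw [show x (x⁻¹ v0) = v0 from RelIso.apply_inv_self x v0] at h
    show T.dist v0 (x⁻¹ v0) = T.dist v0 (x v0)
    rw [← h, T.dist_comm]
  have hyx : nrm T v0 y ≤ nrm T v0 x := by
    unfold dlt at h1
    rw [hninv, inv_inv, h2] at h1
    have hmin : min (nrm T v0 x : ℚ) (nrm T v0 y : ℚ) ≤ (nrm T v0 x : ℚ) :=
      min_le_left _ _
    have h' : (nrm T v0 y : ℚ) ≤ (nrm T v0 x : ℚ) := by linarith
    exact_mod_cast h'
  set n := nrm T v0 x with hn
  have dva : T.dist v0 (x v0) = n := rfl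
  have dvb : T.dist v0 ((x * y) v0) = n := h2
  have dab : T.dist (x v0) ((x * y) v0) = nrm T v0 y := iso_dist hT x v0 (y v0)
  have dabn : T.dist (x v0) ((x * y) v0) ≤ n := by rw [dab]; exact hyx
  have key : ∀ a b : V, T.dist v0 a = n → T.dist v0 b = n → T.dist a b ≤ n →
      ∀ p : V, T.dist v0 p + T.dist p a = T.dist v0 a → 2 * T.dist v0 p ≤ n →
      T.dist v0 p + T.dist p b = T.dist v0 b := by
    intro a b ha hb hab p hseg hp
    exact core hT hseg (by omega)
  ext p
  simp only [halfSet, seg, Set.mem_setOf_eq]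
  have hnxy : nrm T v0 (x * y) = n := h2
  constructor
  · rintro ⟨hseg, hhalf⟩
    have h2d : 2 * T.dist v0 p ≤ n := by omega
    refine ⟨key (x v0) ((x * y) v0) dva dvb dabn p hseg h2d, ?_⟩
    omega
  · rintro ⟨hseg, hhalf⟩
    have h2d : 2 * T.dist v0 p ≤ n := by omega
    have hba : T.dist ((x * y) v0) (x v0) ≤ n := by rw [T.dist_comm]; exact dabn
    refine ⟨key ((x * y) v0) (x v0) dvb dva hba p hseg h2d, ?_⟩
    omega


end TreePaper

end
end
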